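/- There exists a bounded idempotent operator P : ℓ_∞ → ℓ_∞ with infinite-dimensional range such that c_0 ⊆ ker P. -/

import Mathlib

/-!
Split `ℕ` into the infinitely many infinite blocks `{Nat.pair n j | j : ℕ}`. Let `R : ℓ∞ → ℓ∞`
send `x` to the sequence whose `n`-th term is the limit of `x` along a free ultrafilter on the
`n`-th block, and let `S : ℓ∞ → ℓ∞` repeat the `n`-th term of a sequence over the `n`-th block.
Then `R ∘ S = id`, so `P = S ∘ R` is a projection whose range is isomorphic to `ℓ∞`, and `R`
kills `c₀` because a free ultrafilter ignores finitely many coordinates.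
-/

/-- The canonical copy of `c₀` inside `ℓ_∞`: the closed span of the unit vectors. -/
noncomputable def c0sub : Submodule ℝ (lp (fun _ : ℕ => ℝ) ⊤) :=
  (Submodule.span ℝ
    {x : lp (fun _ : ℕ => ℝ) ⊤ | ∃ i : ℕ, ⇑x = Set.indicator {i} (1 : ℕ → ℝ)}).topologicalClosure

open Filter Topology Function
open scoped ENNReal

section UltrafilterLimit

variable {ι E : Type*} [NormedAddCommGroup E] [ProperSpace E] (𝒰 : Ultrafilter ι)
  {f : ι → E} {C : ℝ}

theorem Ultrafilter.tendsto_limUnder_of_norm_le (hf : ∀ i, ‖f i‖ ≤ C) :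
    Tendsto f 𝒰 (𝓝 (limUnder 𝒰 f)) := by
  obtain ⟨a, -, ha⟩ := (isCompact_closedBall (0 : E) C).ultrafilter_le_nhds (𝒰.map f) <| by
    simpa [le_principal_iff] using univ_mem' (f := 𝒰.toFilter) fun i => by simpa using hf i
  exact tendsto_nhds_limUnder ⟨a, ha⟩

theorem Ultrafilter.norm_limUnder_le (hf : ∀ i, ‖f i‖ ≤ C) : ‖limUnder 𝒰 f‖ ≤ C :=
  le_of_tendsto (𝒰.tendsto_limUnder_of_norm_le hf).norm (.of_forall hf)

end UltrafilterLimit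

section LpInfty

variable (𝕜 : Type*) {ι κ α E : Type*} [NormedField 𝕜] [NormedAddCommGroup E] [NormedSpace 𝕜 E]

noncomputable def lpInftyFunLeft (g : κ → ι) : lp (fun _ : ι => E) ∞ →L[𝕜] lp (fun _ : κ => E) ∞ :=
  LinearMap.mkContinuous
    { toFun := fun x => ⟨x ∘ g, memℓp_infty_iff.2 <|
        (memℓp_infty_iff.1 x.2).mono (Set.range_comp_subset_range g fun i => ‖x i‖)⟩
      map_add' := fun _ _ => rfl
      map_smul' := fun _ _ => rfl } 1
    fun x => by
      simpa using lp.norm_le_of_forall_le (norm_nonneg x) fun k => lp.norm_apply_le_norm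
        ENNReal.top_ne_zero x (g k)

variable [ProperSpace E] (𝒰 : Ultrafilter ι)

theorem norm_limUnder_row_le (x : lp (fun _ : α × ι => E) ∞) (a : α) :
    ‖limUnder 𝒰 fun i => x (a, i)‖ ≤ ‖x‖ :=
  𝒰.norm_limUnder_le fun i => lp.norm_apply_le_norm ENNReal.top_ne_zero x (a, i)

theorem tendsto_limUnder_row (x : lp (fun _ : α × ι => E) ∞) (a : α) :
    Tendsto (fun i => x (a, i)) 𝒰 (𝓝 (limUnder 𝒰 fun i => x (a, i))) :=
  𝒰.tendsto_limUnder_of_norm_le fun i => lp.norm_apply_le_norm ENNReal.top_ne_zero x (a, i)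

noncomputable def rowLimit : lp (fun _ : α × ι => E) ∞ →L[𝕜] lp (fun _ : α => E) ∞ :=
  LinearMap.mkContinuous
    { toFun := fun x => ⟨fun a => limUnder 𝒰 fun i => x (a, i),
        memℓp_infty ⟨‖x‖, by rintro - ⟨a, rfl⟩; exact norm_limUnder_row_le 𝒰 x a⟩⟩
      map_add' := fun x y => lp.ext <| funext fun a =>
        ((tendsto_limUnder_row 𝒰 x a).add (tendsto_limUnder_row 𝒰 y a)).limUnder_eq
      map_smul' := fun c x => lp.ext <| funext fun a =>
        ((tendsto_limUnder_row 𝒰 x a).const_smul c).limUnder_eq } 1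
    fun x => by
      simpa using lp.norm_le_of_forall_le (norm_nonneg x) (norm_limUnder_row_le 𝒰 x)

theorem rowLimit_apply_eq_zero {x : lp (fun _ : α × ι => E) ∞} {a : α}
    (h𝒰 : (𝒰 : Filter ι) ≤ cofinite) (hx : {i | x (a, i) ≠ 0}.Finite) : rowLimit 𝕜 𝒰 x a = 0 := by
  refine (tendsto_const_nhds.congr' ?_).limUnder_eq
  filter_upwards [h𝒰 hx.compl_mem_cofinite] with i hi
  exact (not_not.1 hi).symm

theorem rowLimit_lpInftyFunLeft_eq_zero {β : Type*} (h𝒰 : (𝒰 : Filter ι) ≤ cofinite)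
    {e : α × ι → β} (he : Injective e) {x : lp (fun _ : β => E) ∞} (hx : (support x).Finite) :
    rowLimit 𝕜 𝒰 (lpInftyFunLeft 𝕜 e x) = 0 :=
  lp.ext <| funext fun a => rowLimit_apply_eq_zero 𝕜 𝒰 h𝒰 <|
    hx.preimage (he.comp (Prod.mk_right_injective a)).injOn

theorem rowLimit_lpInftyFunLeft_fst (x : lp (fun _ : α => E) ∞) :
    rowLimit 𝕜 𝒰 (lpInftyFunLeft 𝕜 Prod.fst x) = x :=
  lp.ext <| funext fun a => (tendsto_const_nhds (x := x a)).limUnder_eq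

end LpInfty

theorem not_finiteDimensional_lpInfty (𝕜 ι : Type*) [NormedField 𝕜] [Infinite ι] :
    ¬FiniteDimensional 𝕜 (lp (fun _ : ι => 𝕜) ∞) := by
  classical
  intro _
  have hli : LinearIndependent 𝕜 fun i : ι => lp.single ∞ i (1 : 𝕜) :=
    .of_comp (LinearMap.pi fun i => lp.evalₗ (fun _ : ι => 𝕜) ∞ i)
      (Pi.linearIndependent_single_one ι 𝕜)
  have := hli.finite
  exact not_finite ι

theorem LinearMap.not_finiteDimensional_range_comp {K E F : Type*} [DivisionRing K]
    [AddCommGroup E] [Module K E] [AddCommGroup F] [Module K F] {S : E →ₗ[K] F}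
    {R : F →ₗ[K] E} (hRS : LeftInverse R S) (hE : ¬FiniteDimensional K E) :
    ¬FiniteDimensional K (range (S ∘ₗ R)) := by
  rw [range_comp_of_range_eq_top _ (range_eq_top.2 hRS.surjective)]
  exact fun _ =>
    hE (.of_injective S.rangeRestrict ((injective_rangeRestrict_iff S).2 hRS.injective))

theorem eq_zero_of_mem_c0sub {F : Type*} [TopologicalSpace F] [AddCommGroup F] [Module ℝ F]
    [T1Space F]
    (T : lp (fun _ : ℕ => ℝ) ∞ →L[ℝ] F)
    (hT : ∀ (x : lp (fun _ : ℕ => ℝ) ∞) (i : ℕ), ⇑x = Set.indicator {i} 1 → T x = 0) :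
    ∀ x ∈ c0sub, T x = 0 := by
  refine fun x hx =>
    Submodule.topologicalClosure_minimal _ (Submodule.span_le.2 ?_) T.isClosed_ker hx
  rintro y ⟨i, hy⟩
  exact hT y i hy

theorem exists_idempotent_with_infinite_range_killing_c0 :
    ∃ P : lp (fun _ : ℕ => ℝ) ⊤ →L[ℝ] lp (fun _ : ℕ => ℝ) ⊤,
      (∀ x, P (P x) = P x) ∧
      ¬FiniteDimensional ℝ ↥(LinearMap.range (P : lp (fun _ : ℕ => ℝ) ⊤ →ₗ[ℝ] lp (fun _ : ℕ => ℝ) ⊤)) ∧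
      ∀ x ∈ c0sub, P x = 0 := by
  let S := lpInftyFunLeft ℝ (E := ℝ) fun k : ℕ => k.unpair.1
  let R := rowLimit ℝ (hyperfilter ℕ) ∘L lpInftyFunLeft ℝ (E := ℝ) (uncurry Nat.pair)
  have hRS : LeftInverse R S := fun x => by
    have hblock : (fun k : ℕ => k.unpair.1) ∘ uncurry Nat.pair = Prod.fst := by
      ext ⟨n, j⟩
      simp
    show rowLimit ℝ _ (lpInftyFunLeft ℝ ((fun k : ℕ => k.unpair.1) ∘ uncurry Nat.pair) x) = x
    rw [hblock]
    exact rowLimit_lpInftyFunLeft_fst ℝ _ x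
  refine ⟨S ∘L R, fun x => congrArg S (hRS (R x)), ?_, ?_⟩
  · exact LinearMap.not_finiteDimensional_range_comp hRS (not_finiteDimensional_lpInfty ℝ ℕ)
  · refine eq_zero_of_mem_c0sub (S ∘L R) fun x i hx => ?_
    have hRx : R x = 0 := by
      refine rowLimit_lpInftyFunLeft_eq_zero ℝ _ hyperfilter_le_cofinite
        Nat.pairEquiv.injective ?_
      rw [hx]
      exact (Set.finite_singleton i).subset Set.support_indicator_subset
    simp [hRx]
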